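/- arXiv:2412.17102 — 5 statements merged into one kernel-verified Lean document; each statement's English description precedes it below -/
import Mathlib

section
/- Let h₁, …, h_k ∈ ℝⁿ be any vectors, and let π : ℝ^{n+k} → ℝⁿ be orthogonal projection onto the first n coordinates. Then there exist orthonormal vectors f₁, …, f_k ∈ ℝ^{n+k} and a scalar d ∈ ℝ such that π(d·f_i) = h_i for each i. -/
/-- Given vectors `h₁, …, h_k ∈ ℝⁿ`, there exist orthonormal vectors
`f₁, …, f_k ∈ ℝ^{n+k}` and a scalar `d` such that the projection of `d • f i`
onto the first `n` coordinates equals `h i`. -/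
theorem stmt_1 {n k : ℕ} (h : Fin k → EuclideanSpace ℝ (Fin n)) :
    ∃ (f : Fin k → EuclideanSpace ℝ (Fin (n + k))) (d : ℝ),
      Orthonormal ℝ f ∧
      ∀ i : Fin k, ∀ x : Fin n, (d • f i) (Fin.castAdd k x) = h i x := by
  classical
  set c : ℝ := (∑ i : Fin k, ‖h i‖ ^ 2) + 1 with hc
  have hc1 : (1:ℝ) ≤ c := by
    have : 0 ≤ ∑ i : Fin k, ‖h i‖ ^ 2 := Finset.sum_nonneg fun i _ => sq_nonneg _
    linarith
  have hcpos : 0 < c := lt_of_lt_of_le one_pos hc1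
  set d : ℝ := Real.sqrt c with hd
  have hdpos : 0 < d := Real.sqrt_pos.mpr hcpos
  have hd2 : d ^ 2 = c := Real.sq_sqrt hcpos.le
  -- key bound : xᵀ G x ≤ c * ∑ x_i²
  have keybound : ∀ x : Fin k → ℝ,
      (∑ i, ∑ j, x i * x j * (inner ℝ (h i) (h j) : ℝ)) ≤ c * ∑ i, x i ^ 2 := by
    intro x
    have e1 : (∑ i, ∑ j, x i * x j * (inner ℝ (h i) (h j) : ℝ))
        = ‖∑ i, x i • h i‖ ^ 2 := by
      rw [← real_inner_self_eq_norm_sq]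
      simp_rw [sum_inner, inner_sum, real_inner_smul_left, real_inner_smul_right]
      refine Finset.sum_congr rfl fun i _ => Finset.sum_congr rfl fun j _ => by ring
    rw [e1]
    have e2 : ‖∑ i, x i • h i‖ ≤ ∑ i, |x i| * ‖h i‖ := by
      refine (norm_sum_le _ _).trans (le_of_eq ?_)
      refine Finset.sum_congr rfl fun i _ => ?_
      simp [norm_smul]
    have e3 : ‖∑ i, x i • h i‖ ^ 2 ≤ (∑ i, |x i| * ‖h i‖) ^ 2 := by
      apply sq_le_sq' _ e2
      nlinarith [norm_nonneg (∑ i, x i • h i),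
        Finset.sum_nonneg (fun i (_ : i ∈ Finset.univ) =>
          mul_nonneg (abs_nonneg (x i)) (norm_nonneg (h i)))]
    refine e3.trans ?_
    have cs2 : (∑ i, |x i| * ‖h i‖) ^ 2 ≤ (∑ i, |x i| ^ 2) * (∑ i, ‖h i‖ ^ 2) := by
      simpa [sq] using Finset.sum_mul_sq_le_sq_mul_sq Finset.univ (fun i => |x i|) (fun i => ‖h i‖)
    refine cs2.trans ?_
    have habs : (∑ i, |x i| ^ 2) = ∑ i, x i ^ 2 := by simp [sq_abs]
    rw [habs]
    have hle : (∑ i : Fin k, ‖h i‖ ^ 2) ≤ c := by simp [hc]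
    have hx : 0 ≤ ∑ i, x i ^ 2 := Finset.sum_nonneg fun i _ => sq_nonneg _
    calc (∑ i, x i ^ 2) * (∑ i, ‖h i‖ ^ 2) ≤ (∑ i, x i ^ 2) * c :=
          mul_le_mul_of_nonneg_left hle hx
      _ = c * ∑ i, x i ^ 2 := mul_comm _ _
  set A : Matrix (Fin k) (Fin k) ℝ :=
    Matrix.of (fun i j => (if i = j then (1:ℝ) else 0) - c⁻¹ * inner ℝ (h i) (h j)) with hA
  have hApsd : A.PosSemidef := by
    refine Matrix.PosSemidef.of_dotProduct_mulVec_nonneg ?_ ?_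
    · ext i j
      simp only [hA, Matrix.conjTranspose_apply, Matrix.of_apply, star_trivial]
      rw [real_inner_comm (h j) (h i)]
      by_cases hij : i = j <;> simp [hij, eq_comm]
    · intro x
      have expand : dotProduct (star x) (A.mulVec x)
          = (∑ i, x i ^ 2) - c⁻¹ * ∑ i, ∑ j, x i * x j * (inner ℝ (h i) (h j) : ℝ) := by
        simp only [dotProduct, Matrix.mulVec, Matrix.of_apply, star_trivial, hA,
          sub_mul, ite_mul, one_mul, zero_mul, Finset.sum_sub_distrib, mul_sub, Finset.mul_sum]
        congr 1
        · refine Finset.sum_congr rfl fun i _ => ?_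
          simp [mul_ite, sq]
        · refine Finset.sum_congr rfl fun i _ => Finset.sum_congr rfl fun j _ => by ring
      rw [expand]
      have hci : 0 < c⁻¹ := inv_pos.mpr hcpos
      have h2 := mul_le_mul_of_nonneg_left (keybound x) hci.le
      rw [← mul_assoc, inv_mul_cancel₀ hcpos.ne', one_mul] at h2
      linarith
  set S : Matrix (Fin k) (Fin k) ℝ := (open scoped MatrixOrder in CFC.sqrt A) with hS
  have hS2 : S * S = A := by open scoped MatrixOrder in exact CFC.sqrt_mul_sqrt_self A hApsd.nonneg
  have hSsymm : ∀ i j, S i j = S j i := by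
    intro i j
    have h1 : S.conjTranspose = S := by open scoped MatrixOrder in exact (Matrix.nonneg_iff_posSemidef.mp (CFC.sqrt_nonneg A)).1
    have h2 := congrFun (congrFun h1 i) j
    simpa [Matrix.conjTranspose_apply] using h2.symm
  let f : Fin k → EuclideanSpace ℝ (Fin (n + k)) := fun i =>
    WithLp.toLp 2 (fun l => Fin.addCases (motive := fun _ => ℝ) (fun x => d⁻¹ * h i x) (fun y => S i y) l)
  refine ⟨f, d, ?_, ?_⟩
  · rw [orthonormal_iff_ite]
    intro i j
    have key : (inner ℝ (f i) (f j) : ℝ)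
        = (∑ x : Fin n, (d⁻¹ * h i x) * (d⁻¹ * h j x)) + ∑ y : Fin k, S i y * S j y := by
      rw [PiLp.inner_apply]
      simp only [RCLike.inner_apply, conj_trivial]
      rw [Fin.sum_univ_add]
      simp [f, mul_comm]
    rw [key]
    have e4 : (∑ x : Fin n, (d⁻¹ * h i x) * (d⁻¹ * h j x)) = c⁻¹ * inner ℝ (h i) (h j) := by
      have hin : (inner ℝ (h i) (h j) : ℝ) = ∑ x : Fin n, h i x * h j x := by
        rw [PiLp.inner_apply]; simp [RCLike.inner_apply, mul_comm]
      rw [hin, Finset.mul_sum]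
      refine Finset.sum_congr rfl fun x _ => ?_
      have hcd : c⁻¹ = d⁻¹ * d⁻¹ := by
        rw [← hd2]; ring
      rw [hcd]; ring
    have e5 : (∑ y : Fin k, S i y * S j y) = A i j := by
      rw [← hS2]
      simp only [Matrix.mul_apply]
      refine Finset.sum_congr rfl fun y _ => ?_
      rw [hSsymm j y]
    rw [e4, e5]
    simp only [hA, Matrix.of_apply]
    ring
  · intro i x
    have hne : d ≠ 0 := hdpos.ne'
    show d * Fin.addCases (motive := fun _ => ℝ) (fun x => d⁻¹ * h i x) (fun y => S i y) (Fin.castAdd k x) = h i x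
    rw [Fin.addCases_left]
    field_simp
end

section
/- Let X, Y, Z be square matrices satisfying XY = (1/2)Z, YZ = (1/2)X, ZX = (1/2)Y, XY+YX = YZ+ZY = ZX+XZ = 0, and X² = Y² = Z² = −(1/4)I. Then for all real s, t: e^{tY} e^{−sX} e^{−tY} = cos(s/2)·I − 2 sin(s/2) cos t · X + 2 sin(s/2) sin t · Z. -/
/-!
If `J * J = -1` in a real normed algebra, the continuous `ℝ`-algebra map `ℂ → A` sending `i` to `J`
carries Euler's formula to `exp (θ • J) = cos θ + sin θ • J`. Applied to `J = 2 W` with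
`W * W = -1/4`, this gives `exp (a W) = cos (a/2) + 2 sin (a/2) W`. Expanding the conjugate
`exp (t Y) X exp (-t Y)` with these closed forms and the relations `X Y = - Y X = Z/2`,
`Y Z = X/2` rotates `X` by the angle `t` in the plane spanned by `X` and `Z`.
-/

open NormedSpace

theorem exp_smul_of_mul_self_eq_neg_one {A : Type*} [NormedRing A] [NormedAlgebra ℝ A]
    {J : A} (hJ : J * J = -1) (θ : ℝ) :
    exp (θ • J) = Real.cos θ • (1 : A) + Real.sin θ • J := by
  -- `exp` does not depend on the `ℚ`-algebra structure; `map_exp` just needs one.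
  let _ : Algebra ℚ A := Algebra.compHom A (algebraMap ℚ ℝ)
  let ψ := Complex.liftAux J hJ
  have hψ : Continuous ψ := ψ.toLinearMap.continuous_of_finiteDimensional
  have h := map_exp ψ hψ (θ * Complex.I)
  rw [← Complex.exp_eq_exp_ℂ, Complex.exp_mul_I] at h
  simpa only [ψ, Complex.liftAux_apply, Complex.mul_re, Complex.mul_im, Complex.ofReal_re,
    Complex.ofReal_im, Complex.I_re, Complex.I_im, Complex.add_re, Complex.add_im,
    Complex.cos_ofReal_re, Complex.sin_ofReal_re, Complex.cos_ofReal_im, Complex.sin_ofReal_im,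
    Algebra.algebraMap_eq_smul_one, mul_zero, mul_one, sub_self, zero_smul, add_zero, zero_add]
    using h.symm

theorem smul_one_add_smul_mul_mul_smul_one_sub_smul {A : Type*} [Ring A] [Algebra ℂ A]
    {X Y Z : A} (hXY : X * Y = (1 / 2 : ℂ) • Z) (aXY : X * Y + Y * X = 0)
    (hYZ : Y * Z = (1 / 2 : ℂ) • X) (c s : ℂ) :
    (c • 1 + (2 * s) • Y) * X * (c • 1 - (2 * s) • Y) = (c ^ 2 - s ^ 2) • X - (2 * c * s) • Z := by
  have hYX : Y * X = -((1 / 2 : ℂ) • Z) := by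
    rw [← hXY]
    exact eq_neg_of_add_eq_zero_right aXY
  rw [mul_assoc]
  simp only [add_mul, mul_sub, smul_mul_assoc, mul_smul_comm, one_mul, mul_one, mul_assoc, hXY, hYX,
    hYZ, smul_neg, smul_smul]
  match_scalars <;> ring

namespace Matrix

variable {m : Type*} [Fintype m] [DecidableEq m]

theorem exp_ofReal_smul_eq_cos_half_add_sin_half {W : Matrix m m ℂ}
    (hW : W * W = -((1 / 4 : ℂ) • 1)) (a : ℝ) :
    exp ((a : ℂ) • W) = (Real.cos (a / 2) : ℂ) • 1 + (2 * Real.sin (a / 2) : ℂ) • W := by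
  have hJ : ((2 : ℂ) • W) * ((2 : ℂ) • W) = -1 := by
    rw [smul_mul_smul_comm, hW, smul_neg, smul_smul]
    norm_num
  -- Any norm will do: the matrix exponential only sees the (product) topology.
  open scoped Norms.Operator in
  have h := exp_smul_of_mul_self_eq_neg_one hJ (a / 2)
  have ha : (a : ℂ) • W = (a / 2 : ℝ) • ((2 : ℂ) • W) := by
    rw [← Complex.coe_smul, smul_smul]
    push_cast
    ring_nf
  refine (congrArg exp ha).trans (h.trans ?_)
  rw [← Complex.coe_smul, ← Complex.coe_smul, smul_smul, mul_comm]

theorem exp_ofReal_smul_mul_mul_exp_neg {X Y Z : Matrix m m ℂ} (hXY : X * Y = (1 / 2 : ℂ) • Z)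
    (aXY : X * Y + Y * X = 0) (hYZ : Y * Z = (1 / 2 : ℂ) • X) (hY2 : Y * Y = -((1 / 4 : ℂ) • 1))
    (t : ℝ) :
    exp ((t : ℂ) • Y) * X * exp (-((t : ℂ) • Y)) = (Real.cos t : ℂ) • X - (Real.sin t : ℂ) • Z := by
  rw [← neg_smul, ← Complex.ofReal_neg, exp_ofReal_smul_eq_cos_half_add_sin_half hY2,
    exp_ofReal_smul_eq_cos_half_add_sin_half hY2, neg_div, Real.cos_neg, Real.sin_neg]
  push_cast
  rw [mul_neg, neg_smul, ← sub_eq_add_neg, smul_one_add_smul_mul_mul_smul_one_sub_smul hXY aXY hYZ]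
  conv_rhs => rw [show (t : ℂ) = 2 * (t / 2) by ring, Complex.cos_two_mul', Complex.sin_two_mul]
  rw [mul_right_comm]

end Matrix

theorem stmt_8_general {n : ℕ} (X Y Z : Matrix (Fin n) (Fin n) ℂ)
    (hXY : X * Y = (1/2 : ℂ) • Z) (hYZ : Y * Z = (1/2 : ℂ) • X)
    (aXY : X * Y + Y * X = 0)
    (hX2 : X * X = -((1/4 : ℂ) • (1 : Matrix (Fin n) (Fin n) ℂ)))
    (hY2 : Y * Y = -((1/4 : ℂ) • (1 : Matrix (Fin n) (Fin n) ℂ)))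
    (s t : ℝ) :
    exp ((t : ℂ) • Y) * exp (-((s : ℂ) • X)) * exp (-((t : ℂ) • Y)) =
      (Real.cos (s / 2) : ℂ) • (1 : Matrix (Fin n) (Fin n) ℂ)
        - ((2 * Real.sin (s / 2) * Real.cos t : ℝ) : ℂ) • X
        + ((2 * Real.sin (s / 2) * Real.sin t : ℝ) : ℂ) • Z := by
  have hexpX : exp (-((s : ℂ) • X)) =
      (Real.cos (s / 2) : ℂ) • 1 - (2 * Real.sin (s / 2) : ℂ) • X := by
    rw [← neg_smul, ← Complex.ofReal_neg, Matrix.exp_ofReal_smul_eq_cos_half_add_sin_half hX2,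
      neg_div, Real.cos_neg, Real.sin_neg]
    push_cast
    rw [mul_neg, neg_smul, sub_eq_add_neg]
  have hinv : exp ((t : ℂ) • Y) * exp (-((t : ℂ) • Y)) = 1 := by
    rw [← Matrix.exp_add_of_commute _ _ (Commute.refl ((t : ℂ) • Y)).neg_right, add_neg_cancel,
      exp_zero]
  calc exp ((t : ℂ) • Y) * exp (-((s : ℂ) • X)) * exp (-((t : ℂ) • Y))
      = (Real.cos (s / 2) : ℂ) • (exp ((t : ℂ) • Y) * exp (-((t : ℂ) • Y)))
          - (2 * Real.sin (s / 2) : ℂ) • (exp ((t : ℂ) • Y) * X * exp (-((t : ℂ) • Y))) := by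
        rw [hexpX, mul_sub, sub_mul, mul_smul_comm, mul_one, smul_mul_assoc, mul_smul_comm,
          smul_mul_assoc]
    _ = _ := by
        rw [hinv, Matrix.exp_ofReal_smul_mul_mul_exp_neg hXY aXY hYZ hY2]
        push_cast
        match_scalars <;> ring

/-- For matrices `X, Y, Z` satisfying the quaternion-like relations, one has
`e^{tY} e^{−sX} e^{−tY} = cos(s/2) I − 2 sin(s/2) cos t · X + 2 sin(s/2) sin t · Z`. -/
theorem stmt_8 {n : ℕ} (X Y Z : Matrix (Fin n) (Fin n) ℂ)
    (hXY : X * Y = (1/2 : ℂ) • Z) (hYZ : Y * Z = (1/2 : ℂ) • X)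
    (hZX : Z * X = (1/2 : ℂ) • Y)
    (aXY : X * Y + Y * X = 0) (aYZ : Y * Z + Z * Y = 0) (aZX : Z * X + X * Z = 0)
    (hX2 : X * X = -((1/4 : ℂ) • (1 : Matrix (Fin n) (Fin n) ℂ)))
    (hY2 : Y * Y = -((1/4 : ℂ) • (1 : Matrix (Fin n) (Fin n) ℂ)))
    (hZ2 : Z * Z = -((1/4 : ℂ) • (1 : Matrix (Fin n) (Fin n) ℂ)))
    (s t : ℝ) :
    exp ((t : ℂ) • Y) * exp (-((s : ℂ) • X)) * exp (-((t : ℂ) • Y)) =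
      (Real.cos (s / 2) : ℂ) • (1 : Matrix (Fin n) (Fin n) ℂ)
        - ((2 * Real.sin (s / 2) * Real.cos t : ℝ) : ℂ) • X
        + ((2 * Real.sin (s / 2) * Real.sin t : ℝ) : ℂ) • Z :=
  stmt_8_general X Y Z hXY hYZ aXY hX2 hY2 s t
end

section
/- Define f(s,t) = 2 arccos(cos²(s/2) + sin²(s/2)·cos t). Then for all s, t with |s| ≤ π and |t| ≤ π/2, one has |f(s,t)| ≥ |s·t|/√8. -/
set_option maxHeartbeats 1000000 in
/-- Lower bound on `f(s,t) = 2 arccos(cos²(s/2) + sin²(s/2) cos t)`: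
for `|s| ≤ π` and `|t| ≤ π/2`, one has `|f(s,t)| ≥ |s t|/√8`. -/
theorem stmt_11 (s t : ℝ) (hs : |s| ≤ Real.pi) (ht : |t| ≤ Real.pi / 2) :
    |s * t| / Real.sqrt 8 ≤
      |2 * Real.arccos (Real.cos (s / 2) ^ 2 + Real.sin (s / 2) ^ 2 * Real.cos t)| := by
  have hpi := Real.pi_pos
  obtain ⟨hsl, hsu⟩ := abs_le.mp hs
  obtain ⟨htl, htu⟩ := abs_le.mp ht
  set x := Real.cos (s / 2) ^ 2 + Real.sin (s / 2) ^ 2 * Real.cos t with hx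
  have hct : Real.cos t ≤ 1 := Real.cos_le_one t
  have hct' : -1 ≤ Real.cos t := Real.neg_one_le_cos t
  have hpyth : Real.sin (s/2) ^ 2 + Real.cos (s/2) ^ 2 = 1 := Real.sin_sq_add_cos_sq _
  have hsq : (0:ℝ) ≤ Real.sin (s/2) ^ 2 := sq_nonneg _
  have hx1 : x ≤ 1 := by
    rw [hx]; nlinarith [mul_le_mul_of_nonneg_left hct hsq]
  have hx2 : -1 ≤ x := by
    rw [hx]; nlinarith [mul_le_mul_of_nonneg_left hct' hsq]
  -- key identity
  have key : 1 - Real.cos (Real.arccos x) = Real.sin (s/2) ^ 2 * (1 - Real.cos t) := by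
    rw [Real.cos_arccos hx2 hx1, hx]; nlinarith
  set θ := Real.arccos x with hθ
  have hθ0 : 0 ≤ θ := Real.arccos_nonneg x
  clear_value θ
  clear_value x
  -- cos θ ≥ 1 - θ²/2
  have hq : 1 - θ ^ 2 / 2 ≤ Real.cos θ := Real.one_sub_sq_div_two_le_cos
  -- sin²(s/2) ≥ s²/π²
  have hs2 : Real.sin (s/2) ^ 2 ≥ s ^ 2 / Real.pi ^ 2 := by
    have h1 : 2 / Real.pi * (|s| / 2) ≤ Real.sin (|s| / 2) :=
      Real.mul_le_sin (by positivity) (by linarith)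
    have h2 : Real.sin (|s| / 2) ^ 2 = Real.sin (s / 2) ^ 2 := by
      rcases abs_cases s with ⟨h, _⟩ | ⟨h, _⟩
      · rw [h]
      · rw [h, neg_div, Real.sin_neg]; ring
    have h3 : (0:ℝ) ≤ 2 / Real.pi * (|s|/2) := by positivity
    have h4 : (2 / Real.pi * (|s| / 2)) ^ 2 ≤ Real.sin (s/2) ^ 2 := by
      rw [← h2]; nlinarith
    have h5 : (2 / Real.pi * (|s| / 2)) ^ 2 = s ^ 2 / Real.pi ^ 2 := by
      rw [mul_pow, div_pow, div_pow, sq_abs]; field_simp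
    linarith [h5 ▸ h4]
  -- 1 - cos t ≥ 2 t² / π²
  have hct2 : 1 - Real.cos t ≥ 2 * (t ^ 2 / Real.pi ^ 2) := by
    have h2t : Real.cos t = 2 * Real.cos (t/2) ^ 2 - 1 := by
      have := Real.cos_two_mul (t/2)
      rw [show 2 * (t/2) = t by ring] at this
      linarith
    have hpy2 : Real.sin (t/2) ^ 2 + Real.cos (t/2) ^ 2 = 1 := Real.sin_sq_add_cos_sq _
    have hid : 1 - Real.cos t = 2 * Real.sin (t/2) ^ 2 := by rw [h2t]; linarith
    have h1 : 2 / Real.pi * (|t| / 2) ≤ Real.sin (|t| / 2) :=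
      Real.mul_le_sin (by positivity) (by linarith [abs_nonneg t])
    have h2 : Real.sin (|t| / 2) ^ 2 = Real.sin (t / 2) ^ 2 := by
      rcases abs_cases t with ⟨h, _⟩ | ⟨h, _⟩
      · rw [h]
      · rw [h, neg_div, Real.sin_neg]; ring
    have h3 : (0:ℝ) ≤ 2 / Real.pi * (|t|/2) := by positivity
    have h4 : (2 / Real.pi * (|t| / 2)) ^ 2 ≤ Real.sin (t/2) ^ 2 := by
      rw [← h2]; nlinarith
    have h5 : (2 / Real.pi * (|t| / 2)) ^ 2 = t ^ 2 / Real.pi ^ 2 := by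
      rw [mul_pow, div_pow, div_pow, sq_abs]; field_simp
    rw [hid]; linarith [h5 ▸ h4]
  -- combine: θ² ≥ 4 s² t² / π⁴
  have hπ2 : (0:ℝ) < Real.pi ^ 2 := by positivity
  have hcomb : θ ^ 2 ≥ 4 * ((s ^ 2 / Real.pi ^ 2) * (t ^ 2 / Real.pi ^ 2)) := by
    have h1ct : 0 ≤ 1 - Real.cos t := by linarith
    have h6 : (s^2/Real.pi^2) * (2 * (t^2/Real.pi^2)) ≤ Real.sin (s/2)^2 * (1 - Real.cos t) :=
      mul_le_mul hs2 hct2 (by positivity) hsq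
    have he : (s^2/Real.pi^2) * (2 * (t^2/Real.pi^2))
        = 2 * ((s^2/Real.pi^2) * (t^2/Real.pi^2)) := by ring
    linarith [key, hq, h6]
  -- θ ≥ 2|st|/π², stated multiplicatively
  have hθlb : 2 * |s * t| ≤ Real.pi ^ 2 * θ := by
    have ha : (0:ℝ) ≤ 2 * |s * t| / Real.pi ^ 2 := by positivity
    have h7 : (2 * |s * t| / Real.pi ^ 2) ^ 2 ≤ θ ^ 2 := by
      have he : (2 * |s*t| / Real.pi^2) ^ 2 = 4 * ((s^2/Real.pi^2) * (t^2/Real.pi^2)) := by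
        rw [div_pow, mul_pow, sq_abs, mul_pow]; field_simp; ring
      rw [he]; linarith
    have := le_of_pow_le_pow_left₀ two_ne_zero hθ0 h7
    rw [div_le_iff₀ hπ2] at this
    linarith
  -- final
  have hsqrt8 : (0:ℝ) < Real.sqrt 8 := Real.sqrt_pos.mpr (by norm_num)
  have hsqrt8lb : (2.82:ℝ) ≤ Real.sqrt 8 := by
    nlinarith [Real.sq_sqrt (show (0:ℝ) ≤ 8 by norm_num), Real.sqrt_nonneg 8]
  have hpilt : Real.pi < 3.15 := Real.pi_lt_d2
  have hpisq : Real.pi ^ 2 < 9.93 := by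
    have h := pow_lt_pow_left₀ hpilt hpi.le (n := 2) two_ne_zero
    nlinarith [h]
  have habs : |2 * θ| = 2 * θ := abs_of_nonneg (by linarith)
  rw [habs, div_le_iff₀ hsqrt8]
  have hm : 2 * |s * t| * Real.sqrt 8 ≤ Real.pi ^ 2 * θ * Real.sqrt 8 :=
    mul_le_mul_of_nonneg_right hθlb hsqrt8.le
  nlinarith [hm, mul_le_mul_of_nonneg_left hsqrt8lb (abs_nonneg (s * t)),
    abs_nonneg (s * t), hθ0, mul_nonneg hθ0 hsqrt8.le]
end

section
/- There exist universal constants c > 0 and C < ∞ such that for all d ≥ 0 and μ*, ν*, ξ* ≥ 0, the measure |H| of the set H ⊆ (ℝ/4πℤ) × ℝ (the projection of the hexagon H̃ = {(μ+ν, dν+ξ) : |μ| ≤ μ*, |ν| ≤ ν*, |ξ| ≤ ξ*}) satisfies c·V̄ ≤ |H| ≤ C·V̄, where V̄ = min(dμ*ν* + μ*ξ* + ν*ξ*, dν* + ξ*). -/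
/-!
On a fundamental strip `Ioc (n • T) ((n + 1) • T) ×ˢ univ` the projection `ℝ × ℝ → AddCircle T × ℝ`
is injective and measure preserving. Cutting a measurable set along these strips shows that the
projection never increases its measure, and preserves it when the projection is injective on the
set, e.g. when each horizontal section lies in an interval of length less than `T`.

Upper bound: `H̃` lies in a sheared rectangle of area at most `8 (dμ*ν* + μ*ξ* + ν*ξ*)`, and `H`
lies in the band `|y| ≤ dν* + ξ*` of the cylinder, of area `8π (dν* + ξ*)`.
Lower bound: `H̃` contains four parallelograms, each spanned by two of the three generators of the
hexagon and cut down to horizontal width at most `2π`, so each embeds in the cylinder. Their areas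
add up to at least `4 V̄`, so the largest one has area at least `V̄`.
-/

open MeasureTheory

instance : Fact (0 < 4 * Real.pi) := ⟨by positivity⟩

open Set Real
open scoped Function

noncomputable def cylinderMk (T : ℝ) : ℝ × ℝ → AddCircle T × ℝ :=
  fun p => ((p.1 : AddCircle T), p.2)

lemma measurable_cylinderMk (T : ℝ) : Measurable (cylinderMk T) :=
  AddCircle.measurable_mk'.prodMap measurable_id

def cylinderStrip (T : ℝ) (n : ℤ) : Set (ℝ × ℝ) := Ioc (n • T) ((n + 1) • T) ×ˢ univ

lemma measurableSet_cylinderStrip (T : ℝ) (n : ℤ) : MeasurableSet (cylinderStrip T n) :=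
  measurableSet_Ioc.prod .univ

lemma pairwise_disjoint_cylinderStrip (T : ℝ) : Pairwise (Disjoint on cylinderStrip T) :=
  fun _ _ hmn => (pairwise_disjoint_Ioc_zsmul T hmn).set_prod_left univ univ

lemma iUnion_cylinderStrip {T : ℝ} (hT : 0 < T) : ⋃ n, cylinderStrip T n = univ := by
  simp only [cylinderStrip]
  rw [← iUnion_prod_const, iUnion_Ioc_zsmul hT, univ_prod_univ]

def shearSlab (a b c : ℝ) : Set (ℝ × ℝ) := {p | |p.1| ≤ a ∧ |p.2 - c * p.1| ≤ b}

lemma measurableSet_shearSlab (a b c : ℝ) : MeasurableSet (shearSlab a b c) := by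
  rw [shearSlab, ofPred_and]
  exact (measurableSet_le (by fun_prop) measurable_const).inter
    (measurableSet_le (by fun_prop) measurable_const)

lemma volume_shearSlab {a : ℝ} (ha : 0 ≤ a) (b c : ℝ) :
    volume (shearSlab a b c) = ENNReal.ofReal (4 * a * b) := by
  have hshear : MeasurePreserving (fun p : ℝ × ℝ => (p.1, p.2 - c * p.1)) :=
    (MeasurePreserving.id volume).skew_product (g := fun x y => y - c * x) (by fun_prop)
      (ae_of_all _ fun x => (measurePreserving_sub_right volume (c * x)).map_eq)
  have hpre : shearSlab a b c =
      (fun p : ℝ × ℝ => (p.1, p.2 - c * p.1)) ⁻¹' (Icc (-a) a ×ˢ Icc (-b) b) := by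
    ext p
    simp only [shearSlab, mem_ofPred_eq, mem_preimage, mem_prod, mem_Icc, abs_le]
  rw [hpre, hshear.measure_preimage (measurableSet_Icc.prod measurableSet_Icc).nullMeasurableSet,
    Measure.volume_eq_prod, Measure.prod_prod, Real.volume_Icc, Real.volume_Icc,
    ← ENNReal.ofReal_mul (by linarith)]
  ring_nf

lemma volume_preimage_swap_shearSlab {a : ℝ} (ha : 0 ≤ a) (b c : ℝ) :
    volume (Prod.swap ⁻¹' shearSlab a b c) = ENNReal.ofReal (4 * a * b) := by
  rw [Measure.volume_eq_prod, (Measure.measurePreserving_swap).measure_preimage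
    (measurableSet_shearSlab a b c).nullMeasurableSet, ← Measure.volume_eq_prod,
    volume_shearSlab ha]

section Cylinder

variable {T : ℝ} [Fact (0 < T)]

lemma AddCircle.injOn_coe_Ioc (a : ℝ) : InjOn ((↑) : ℝ → AddCircle T) (Ioc a (a + T)) := by
  intro x hx y hy hxy
  have h := AddCircle.equivIoc_coe_eq (p := T) hx
  rw [hxy, AddCircle.equivIoc_coe_eq hy] at h
  exact congrArg Subtype.val h.symm

lemma injOn_cylinderMk_cylinderStrip (n : ℤ) : InjOn (cylinderMk T) (cylinderStrip T n) := by
  rintro ⟨x, y⟩ ⟨hx, -⟩ ⟨x', y'⟩ ⟨hx', -⟩ h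
  simp only [cylinderMk, Prod.mk.injEq] at h
  rw [add_one_zsmul] at hx hx'
  exact Prod.ext (AddCircle.injOn_coe_Ioc _ hx hx' h.1) h.2

lemma measurePreserving_cylinderMk_cylinderStrip (n : ℤ) :
    MeasurePreserving (cylinderMk T) (volume.restrict (cylinderStrip T n)) volume := by
  have h := (AddCircle.measurePreserving_mk T (n • T)).prod
    (MeasurePreserving.id (volume : Measure ℝ))
  rwa [← Measure.restrict_univ (μ := (volume : Measure ℝ)), Measure.prod_restrict,
    Measure.restrict_univ, ← Measure.volume_eq_prod, ← Measure.volume_eq_prod, ← add_one_zsmul]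
    at h

lemma volume_cylinderMk_image_of_subset_cylinderStrip {B : Set (ℝ × ℝ)} (hB : MeasurableSet B)
    {n : ℤ} (hBn : B ⊆ cylinderStrip T n) : volume (cylinderMk T '' B) = volume B := by
  have hinj := injOn_cylinderMk_cylinderStrip (T := T) n
  have himage : MeasurableSet (cylinderMk T '' B) :=
    hB.image_of_measurable_injOn (measurable_cylinderMk T) (hinj.mono hBn)
  rw [← (measurePreserving_cylinderMk_cylinderStrip n).measure_preimage himage.nullMeasurableSet,
    Measure.restrict_apply' (measurableSet_cylinderStrip T n), hinj.preimage_image_inter hBn]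

lemma tsum_volume_cylinderMk_image_inter_cylinderStrip {A : Set (ℝ × ℝ)} (hA : MeasurableSet A) :
    ∑' n, volume (cylinderMk T '' (A ∩ cylinderStrip T n)) = volume A := by
  have hmeas (n : ℤ) : MeasurableSet (A ∩ cylinderStrip T n) :=
    hA.inter (measurableSet_cylinderStrip T n)
  simp_rw [volume_cylinderMk_image_of_subset_cylinderStrip (hmeas _) inter_subset_right]
  rw [← measure_iUnion _ hmeas, ← inter_iUnion, iUnion_cylinderStrip Fact.out, inter_univ]
  exact fun m n hmn =>
    (pairwise_disjoint_cylinderStrip T hmn).mono inter_subset_right inter_subset_right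

lemma image_cylinderMk_eq_iUnion (A : Set (ℝ × ℝ)) :
    cylinderMk T '' A = ⋃ n, cylinderMk T '' (A ∩ cylinderStrip T n) := by
  rw [← image_iUnion, ← inter_iUnion, iUnion_cylinderStrip Fact.out, inter_univ]

lemma volume_cylinderMk_image_le {A : Set (ℝ × ℝ)} (hA : MeasurableSet A) :
    volume (cylinderMk T '' A) ≤ volume A := by
  rw [← tsum_volume_cylinderMk_image_inter_cylinderStrip (T := T) hA,
    image_cylinderMk_eq_iUnion (T := T) A]
  exact measure_iUnion_le _

lemma volume_cylinderMk_image_of_injOn {A : Set (ℝ × ℝ)} (hA : MeasurableSet A)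
    (hinj : InjOn (cylinderMk T) A) : volume (cylinderMk T '' A) = volume A := by
  rw [← tsum_volume_cylinderMk_image_inter_cylinderStrip (T := T) hA,
    image_cylinderMk_eq_iUnion (T := T) A]
  refine measure_iUnion (fun m n hmn => ?_) fun n => ?_
  · rw [Function.onFun, disjoint_iff_inter_eq_empty,
      ← hinj.image_inter inter_subset_left inter_subset_left,
      ((pairwise_disjoint_cylinderStrip T hmn).mono inter_subset_right inter_subset_right).inter_eq,
      image_empty]
  · exact (hA.inter (measurableSet_cylinderStrip T n)).image_of_measurable_injOn
      (measurable_cylinderMk T) (hinj.mono inter_subset_left)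

lemma injOn_cylinderMk_of_abs_fst_sub_le {S : Set (ℝ × ℝ)} (h : ℝ → ℝ) {r : ℝ} (hr : 2 * r < T)
    (hS : ∀ p ∈ S, |p.1 - h p.2| ≤ r) : InjOn (cylinderMk T) S := by
  rintro ⟨x, y⟩ hp ⟨x', y'⟩ hp' hq
  simp only [cylinderMk, Prod.mk.injEq] at hq
  obtain ⟨hx, rfl⟩ := hq
  have hwindow (z : ℝ) (hz : |z - h y| ≤ r) : z ∈ Ioc (h y - T / 2) (h y - T / 2 + T) := by
    rw [abs_le] at hz
    constructor <;> linarith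
  rw [AddCircle.injOn_coe_Ioc _ (hwindow x (hS _ hp)) (hwindow x' (hS _ hp')) hx]

lemma volume_le_volume_cylinderMk_image {S A : Set (ℝ × ℝ)} (hS : MeasurableSet S) (hSA : S ⊆ A)
    (h : ℝ → ℝ) {r : ℝ} (hr : 2 * r < T) (hfib : ∀ p ∈ S, |p.1 - h p.2| ≤ r) :
    volume S ≤ volume (cylinderMk T '' A) :=
  calc volume S = volume (cylinderMk T '' S) :=
        (volume_cylinderMk_image_of_injOn hS (injOn_cylinderMk_of_abs_fst_sub_le h hr hfib)).symm
    _ ≤ volume (cylinderMk T '' A) := measure_mono (image_mono hSA)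

lemma volume_cylinderMk_image_le_of_subset_shearSlab {A : Set (ℝ × ℝ)} {a b c : ℝ} (ha : 0 ≤ a)
    (hA : A ⊆ shearSlab a b c) : volume (cylinderMk T '' A) ≤ ENNReal.ofReal (4 * a * b) :=
  calc volume (cylinderMk T '' A) ≤ volume (cylinderMk T '' shearSlab a b c) :=
        measure_mono (image_mono hA)
    _ ≤ volume (shearSlab a b c) := volume_cylinderMk_image_le (measurableSet_shearSlab a b c)
    _ = ENNReal.ofReal (4 * a * b) := volume_shearSlab ha b c

lemma volume_cylinderMk_image_le_of_abs_snd_le {A : Set (ℝ × ℝ)} {b : ℝ}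
    (hA : ∀ p ∈ A, |p.2| ≤ b) : volume (cylinderMk T '' A) ≤ ENNReal.ofReal (T * (2 * b)) := by
  have hsub : cylinderMk T '' A ⊆ univ ×ˢ Icc (-b) b := by
    rintro _ ⟨p, hp, rfl⟩
    exact ⟨trivial, abs_le.mp (hA p hp)⟩
  refine (measure_mono hsub).trans_eq ?_
  rw [Measure.volume_eq_prod, Measure.prod_prod, AddCircle.measure_univ, Real.volume_Icc,
    ← ENNReal.ofReal_mul (le_of_lt Fact.out)]
  ring_nf

end Cylinder

def hexagon (d μs νs ξs : ℝ) : Set (ℝ × ℝ) :=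
  {p | ∃ μ ν ξ : ℝ, |μ| ≤ μs ∧ |ν| ≤ νs ∧ |ξ| ≤ ξs ∧ p = (μ + ν, d * ν + ξ)}

section Hexagon

variable {d μs νs ξs : ℝ}

lemma hexagon_subset_shearSlab (hd : 0 ≤ d) :
    hexagon d μs νs ξs ⊆ shearSlab (μs + νs) (ξs + d * μs) d := by
  rintro _ ⟨μ, ν, ξ, hμ, hν, hξ, rfl⟩
  refine ⟨(abs_add_le μ ν).trans (add_le_add hμ hν), ?_⟩
  calc |d * ν + ξ - d * (μ + ν)| = |ξ - d * μ| := by ring_nf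
    _ ≤ |ξ| + |d * μ| := abs_sub _ _
    _ ≤ ξs + d * μs := by
      rw [abs_mul, abs_of_nonneg hd]
      exact add_le_add hξ (mul_le_mul_of_nonneg_left hμ hd)

lemma abs_snd_le_of_mem_hexagon (hd : 0 ≤ d) {p : ℝ × ℝ} (hp : p ∈ hexagon d μs νs ξs) :
    |p.2| ≤ d * νs + ξs := by
  obtain ⟨μ, ν, ξ, -, hν, hξ, rfl⟩ := hp
  calc |d * ν + ξ| ≤ |d * ν| + |ξ| := abs_add_le _ _
    _ ≤ d * νs + ξs := by
      rw [abs_mul, abs_of_nonneg hd]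
      exact add_le_add (mul_le_mul_of_nonneg_left hν hd) hξ

lemma hexagon_subset_shearSlab_zero (hd : 0 ≤ d) :
    hexagon d μs νs ξs ⊆ shearSlab (μs + νs) (ξs + d * νs) 0 := by
  intro p hp
  obtain ⟨μ, ν, ξ, hμ, hν, -, rfl⟩ := id hp
  refine ⟨(abs_add_le μ ν).trans (add_le_add hμ hν), ?_⟩
  rw [zero_mul, sub_zero, add_comm ξs]
  exact abs_snd_le_of_mem_hexagon hd hp

lemma ofReal_le_volume_image_hexagon_μξ {a b : ℝ} (ha : 0 ≤ a) (haμ : a ≤ μs) (haπ : a ≤ π)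
    (hb : b ≤ ξs) (hνs : 0 ≤ νs) :
    ENNReal.ofReal (4 * a * b) ≤ volume (cylinderMk (4 * π) '' hexagon d μs νs ξs) := by
  rw [← volume_shearSlab ha b 0]
  refine volume_le_volume_cylinderMk_image (measurableSet_shearSlab a b 0) ?_ (fun _ => 0)
    (r := π) (by linarith [pi_pos]) ?_
  · rintro ⟨x, y⟩ ⟨hx, hy⟩
    refine ⟨x, 0, y, hx.trans haμ, by rwa [abs_zero], ?_, by simp⟩
    simpa using hy.trans hb
  · rintro ⟨x, y⟩ ⟨hx, -⟩
    simpa using hx.trans haπ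

lemma ofReal_le_volume_image_hexagon_μν {a b : ℝ} (hd : 0 ≤ d) (ha : 0 ≤ a) (haν : a ≤ d * νs)
    (hbμ : b ≤ μs) (hbπ : b ≤ π) (hξs : 0 ≤ ξs) :
    ENNReal.ofReal (4 * a * b) ≤ volume (cylinderMk (4 * π) '' hexagon d μs νs ξs) := by
  rcases hd.eq_or_lt with rfl | hd
  · simp [le_antisymm (by simpa using haν) ha]
  rw [← volume_preimage_swap_shearSlab ha b d⁻¹]
  refine volume_le_volume_cylinderMk_image
    ((measurableSet_shearSlab a b d⁻¹).preimage measurable_swap) ?_ (fun y => d⁻¹ * y)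
    (r := π) (by linarith [pi_pos]) ?_
  · rintro ⟨x, y⟩ ⟨hy, hx⟩
    refine ⟨x - d⁻¹ * y, d⁻¹ * y, 0, hx.trans hbμ, ?_, by rwa [abs_zero], ?_⟩
    · rw [abs_mul, abs_inv, abs_of_pos hd, inv_mul_le_iff₀ hd]
      exact hy.trans haν
    · ext <;> field_simp <;> ring
  · rintro ⟨x, y⟩ ⟨-, hx⟩
    exact hx.trans hbπ

lemma ofReal_le_volume_image_hexagon_νξ {a b : ℝ} (ha : 0 ≤ a) (haν : a ≤ νs)
    (hb : b ≤ ξs) (hwin : a ≤ π ∨ b ≤ d * π) (hμs : 0 ≤ μs) :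
    ENNReal.ofReal (4 * a * b) ≤ volume (cylinderMk (4 * π) '' hexagon d μs νs ξs) := by
  rcases le_or_gt b 0 with hb0 | hb0
  · rw [ENNReal.ofReal_of_nonpos (by nlinarith)]
    exact zero_le
  have hsub : shearSlab a b d ⊆ hexagon d μs νs ξs := by
    rintro ⟨x, y⟩ ⟨hx, hy⟩
    exact ⟨0, x, y - d * x, by rwa [abs_zero], hx.trans haν, hy.trans hb, by ext <;> simp⟩
  rw [← volume_shearSlab ha b d]
  rcases hwin with haπ | hbπ
  · refine volume_le_volume_cylinderMk_image (measurableSet_shearSlab a b d) hsub (fun _ => 0)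
      (r := π) (by linarith [pi_pos]) ?_
    rintro ⟨x, y⟩ ⟨hx, -⟩
    simpa using hx.trans haπ
  · have hd : 0 < d := by
      by_contra! h
      nlinarith [pi_pos]
    refine volume_le_volume_cylinderMk_image (measurableSet_shearSlab a b d) hsub
      (fun y => d⁻¹ * y) (r := π) (by linarith [pi_pos]) ?_
    rintro ⟨x, y⟩ ⟨-, hy⟩
    have hxy : x - d⁻¹ * y = -(d⁻¹ * (y - d * x)) := by field_simp; ring
    rw [hxy, abs_neg, abs_mul, abs_inv, abs_of_pos hd, inv_mul_le_iff₀ hd]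
    exact hy.trans hbπ

lemma min_le_hexagon_parallelogram_areas (hd : 0 ≤ d) (hμs : 0 ≤ μs) (hνs : 0 ≤ νs)
    (hξs : 0 ≤ ξs) :
    min (d * μs * νs + μs * ξs + νs * ξs) (d * νs + ξs) ≤
      min μs π * ξs + d * νs * min μs π + min νs π * ξs + νs * min ξs (d * π) := by
  have hπ : 1 < π := by linarith [pi_gt_three]
  have hV₂ : min (d * μs * νs + μs * ξs + νs * ξs) (d * νs + ξs) ≤ d * νs + ξs := min_le_right _ _
  have hV₁ : min (d * μs * νs + μs * ξs + νs * ξs) (d * νs + ξs) ≤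
      d * μs * νs + μs * ξs + νs * ξs := min_le_left _ _
  have hν₀ : 0 ≤ min νs π * ξs := mul_nonneg (le_min hνs pi_pos.le) hξs
  have hξ₀ : 0 ≤ νs * min ξs (d * π) := mul_nonneg hνs (le_min hξs (by positivity))
  rcases le_total π μs with hμ | hμ
  · rw [min_eq_right hμ]
    nlinarith [mul_le_mul_of_nonneg_right hπ.le (by positivity : 0 ≤ d * νs + ξs)]
  rw [min_eq_left hμ]
  rcases le_total ξs (d * π) with hξ | hξ
  · rw [min_eq_left hξ]
    nlinarith
  rw [min_eq_right hξ]
  rcases le_total π νs with hν | hν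
  · rw [min_eq_right hν]
    nlinarith [mul_le_mul_of_nonneg_right hπ.le (by positivity : 0 ≤ d * νs + ξs)]
  · rw [min_eq_left hν]
    nlinarith [mul_nonneg (mul_nonneg hνs hd) pi_pos.le]

lemma ofReal_min_le_volume_image_hexagon (hd : 0 ≤ d) (hμs : 0 ≤ μs) (hνs : 0 ≤ νs)
    (hξs : 0 ≤ ξs) :
    ENNReal.ofReal (min (d * μs * νs + μs * ξs + νs * ξs) (d * νs + ξs)) ≤
      volume (cylinderMk (4 * π) '' hexagon d μs νs ξs) := by
  set A₁ := 4 * min μs π * ξs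
  set A₂ := 4 * (d * νs) * min μs π
  set A₃ := 4 * min νs π * ξs
  set A₄ := 4 * νs * min ξs (d * π)
  have h₁ : ENNReal.ofReal A₁ ≤ _ := ofReal_le_volume_image_hexagon_μξ (d := d)
    (le_min hμs pi_pos.le) (min_le_left _ _) (min_le_right _ _) le_rfl hνs
  have h₂ : ENNReal.ofReal A₂ ≤ _ := ofReal_le_volume_image_hexagon_μν hd (by positivity) le_rfl
    (min_le_left _ _) (min_le_right _ _) hξs
  have h₃ : ENNReal.ofReal A₃ ≤ _ := ofReal_le_volume_image_hexagon_νξ (d := d)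
    (le_min hνs pi_pos.le) (min_le_left _ _) le_rfl (.inl (min_le_right _ _)) hμs
  have h₄ : ENNReal.ofReal A₄ ≤ _ := ofReal_le_volume_image_hexagon_νξ hνs le_rfl
    (min_le_left _ _) (.inr (min_le_right _ _)) hμs
  calc ENNReal.ofReal (min (d * μs * νs + μs * ξs + νs * ξs) (d * νs + ξs))
      ≤ ENNReal.ofReal (max (max A₁ A₂) (max A₃ A₄)) := by
        refine ENNReal.ofReal_le_ofReal ?_
        linarith [min_le_hexagon_parallelogram_areas hd hμs hνs hξs, le_max_left A₁ A₂,
          le_max_right A₁ A₂, le_max_left A₃ A₄, le_max_right A₃ A₄,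
          le_max_left (max A₁ A₂) (max A₃ A₄), le_max_right (max A₁ A₂) (max A₃ A₄)]
    _ ≤ volume (cylinderMk (4 * π) '' hexagon d μs νs ξs) := by
        simp only [ENNReal.ofReal_max]
        exact max_le (max_le h₁ h₂) (max_le h₃ h₄)

lemma volume_image_hexagon_le (hd : 0 ≤ d) (hμs : 0 ≤ μs) (hνs : 0 ≤ νs) (hξs : 0 ≤ ξs) :
    volume (cylinderMk (4 * π) '' hexagon d μs νs ξs) ≤
      ENNReal.ofReal (8 * (d * μs * νs + μs * ξs + νs * ξs)) := by
  rcases le_total μs νs with h | h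
  · refine (volume_cylinderMk_image_le_of_subset_shearSlab (by positivity)
      (hexagon_subset_shearSlab hd)).trans (ENNReal.ofReal_le_ofReal ?_)
    nlinarith [mul_le_mul_of_nonneg_left h (mul_nonneg hd hμs)]
  · refine (volume_cylinderMk_image_le_of_subset_shearSlab (by positivity)
      (hexagon_subset_shearSlab_zero hd)).trans (ENNReal.ofReal_le_ofReal ?_)
    nlinarith [mul_le_mul_of_nonneg_left h (mul_nonneg hd hνs)]

end Hexagon

/-- Two-sided universal estimate for the measure of the wrapped hexagon `H` on the
cylinder `(ℝ/4πℤ) × ℝ`: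
`c·min(dμ*ν* + μ*ξ* + ν*ξ*, dν* + ξ*) ≤ |H| ≤ C·min(dμ*ν* + μ*ξ* + ν*ξ*, dν* + ξ*)`. -/
theorem stmt_15 :
    ∃ c C : ℝ, 0 < c ∧ c ≤ C ∧
      ∀ d μs νs ξs : ℝ, 0 ≤ d → 0 ≤ μs → 0 ≤ νs → 0 ≤ ξs →
        ENNReal.ofReal (c * min (d * μs * νs + μs * ξs + νs * ξs) (d * νs + ξs)) ≤
          volume ((fun p : ℝ × ℝ => ((p.1 : AddCircle (4 * Real.pi)), p.2)) ''
            {p : ℝ × ℝ | ∃ μ ν ξ : ℝ,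
              |μ| ≤ μs ∧ |ν| ≤ νs ∧ |ξ| ≤ ξs ∧ p = (μ + ν, d * ν + ξ)}) ∧
        volume ((fun p : ℝ × ℝ => ((p.1 : AddCircle (4 * Real.pi)), p.2)) ''
            {p : ℝ × ℝ | ∃ μ ν ξ : ℝ,
              |μ| ≤ μs ∧ |ν| ≤ νs ∧ |ξ| ≤ ξs ∧ p = (μ + ν, d * ν + ξ)}) ≤
          ENNReal.ofReal (C * min (d * μs * νs + μs * ξs + νs * ξs) (d * νs + ξs)) := by
  refine ⟨1, 8 * π, one_pos, by linarith [pi_gt_three], fun d μs νs ξs hd hμs hνs hξs => ?_⟩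
  change _ ≤ volume (cylinderMk (4 * π) '' hexagon d μs νs ξs) ∧
    volume (cylinderMk (4 * π) '' hexagon d μs νs ξs) ≤ _
  refine ⟨by simpa only [one_mul] using ofReal_min_le_volume_image_hexagon hd hμs hνs hξs, ?_⟩
  have hV₁ : 0 ≤ d * μs * νs + μs * ξs + νs * ξs := by positivity
  rw [mul_min_of_nonneg _ _ (by positivity), ENNReal.ofReal_min]
  refine le_min ?_ ?_
  · exact (volume_image_hexagon_le hd hμs hνs hξs).trans
      (ENNReal.ofReal_le_ofReal (by nlinarith [pi_gt_three]))
  · refine (volume_cylinderMk_image_le_of_abs_snd_le fun p hp =>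
      abs_snd_le_of_mem_hexagon hd hp).trans_eq ?_
    ring_nf
end

section
/- Let ι > 0 and let M ≥ 4π/ι be an integer. Fix d, μ*, ν*, ξ* ≥ 0 and let H ⊆ 𝕊 × ℝ (with 𝕊 = ℝ/4πℤ) be the projection of {(μ+ν, dν+ξ) : |μ| ≤ μ*, |ν| ≤ ν*, |ξ| ≤ ξ*}, and let H_ι = H ∩ ([−ι,ι] × ℝ) (first coordinate taken in a fundamental domain). Then H is contained in the union of the (2M+1)² translates H_ι + ((k_μ+k_ν)ι, d·k_ν·ι) over integers |k_μ|, |k_ν| ≤ M; consequently |H| ≤ (2M+1)²·|H_ι|. -/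
/-! Every real `x` can be shifted by some `k ι` with `|k| ≤ M` so that `|x - k ι| ≤ |x|` and
`x - k ι` is, mod `4π`, within `ι / 2` of `0`. Shift `ν` this way, keeping the real number
`ν' = ν - kν ι` since `d ν` sees it, and `μ` likewise, replacing `μ - kμ ι` by its small
representative `μ'` mod `4π`. Then `(μ' + ν', d ν' + ξ)` lies in `H_ι`, and `(μ + ν, d ν + ξ)` is
its translate by `((kμ + kν) ι, d kν ι)`. The volume bound follows from subadditivity and
translation invariance. -/

open MeasureTheory

theorem exists_int_abs_sub_mul_le_min {ι y : ℝ} (hι : 0 < ι) (hy : 0 ≤ y) :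
    ∃ k : ℤ, 0 ≤ k ∧ |y - k * ι| ≤ ι / 2 ∧ |y - k * ι| ≤ y := by
  have hk : |y - round (y / ι) * ι| ≤ ι / 2 := by
    have := mul_le_mul_of_nonneg_right (abs_sub_round (y / ι)) hι.le
    rwa [← abs_of_pos hι, ← abs_mul, abs_of_pos hι, sub_mul, div_mul_cancel₀ _ hι.ne',
      one_div_mul_eq_div] at this
  have hk0 : 0 ≤ round (y / ι) := by
    rw [round_eq]; exact Int.floor_nonneg.mpr (by positivity)
  refine ⟨_, hk0, hk, abs_le.mpr ⟨?_, ?_⟩⟩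
  · obtain ⟨hk₁, -⟩ := abs_le.mp hk
    rcases hk0.eq_or_lt with h | h
    · simp [← h, hy]
    · -- `1 ≤ k` gives `k ι ≤ y + ι / 2 ≤ y + k ι / 2`
      have : (1 : ℝ) ≤ round (y / ι) := by exact_mod_cast h
      nlinarith
  · have : (0 : ℝ) ≤ round (y / ι) := by exact_mod_cast hk0
    nlinarith

theorem AddCircle.coe_sub_int_mul_period {p : ℝ} (x : ℝ) (n : ℤ) :
    ((x - n * p : ℝ) : AddCircle p) = x := by
  rw [AddCircle.coe_sub, ← zsmul_eq_mul, AddCircle.coe_zsmul, AddCircle.coe_period, smul_zero,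
    sub_zero]

theorem AddCircle.exists_int_shift_near_zero_of_nonneg {p ι x : ℝ} {M : ℕ} (hp : 0 < p)
    (hι : 0 < ι) (hM : p / ι ≤ M) (hx : 0 ≤ x) :
    ∃ k : ℤ, 0 ≤ k ∧ k ≤ M ∧ |x - k * ι| ≤ x ∧
      ∃ r : ℝ, |r| ≤ ι / 2 ∧ |r| ≤ x ∧ (r : AddCircle p) = ↑(x - k * ι) := by
  set n := ⌊x / p⌋
  have hn₀ : (0 : ℝ) ≤ n := by exact_mod_cast Int.floor_nonneg.mpr (div_nonneg hx hp.le)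
  have hnx : n * p ≤ x := (le_div_iff₀ hp).mp (Int.floor_le _)
  have hxn : x < (n + 1) * p := (div_lt_iff₀ hp).mp (Int.lt_floor_add_one _)
  obtain ⟨k, hk₀, hkι, hkx⟩ := exists_int_abs_sub_mul_le_min hι (sub_nonneg.mpr hnx)
  obtain ⟨hk₁, hk₂⟩ := abs_le.mp hkι
  have hk₀' : (0 : ℝ) ≤ k := by exact_mod_cast hk₀
  have hkM : k ≤ M := by
    have hpM : p ≤ M * ι := (div_le_iff₀ hι).mp hM
    -- `k ι ≤ y + ι / 2 < p + ι / 2 ≤ (M + 1 / 2) ι`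
    have : (k : ℝ) < M + 1 := by
      by_contra! h
      nlinarith
    exact_mod_cast Int.lt_add_one_iff.mp (by exact_mod_cast this)
  refine ⟨k, hk₀, hkM, ?_, x - n * p - k * ι, hkι, ?_, ?_⟩
  · have := (abs_le.mp hkx).1
    exact abs_le.mpr ⟨by nlinarith [mul_nonneg hn₀ hp.le], by nlinarith⟩
  · linarith [mul_nonneg hn₀ hp.le]
  · rw [sub_right_comm, AddCircle.coe_sub_int_mul_period]

theorem AddCircle.exists_int_shift_near_zero {p ι : ℝ} {M : ℕ} (hp : 0 < p) (hι : 0 < ι)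
    (hM : p / ι ≤ M) (x : ℝ) :
    ∃ k : ℤ, |k| ≤ M ∧ |x - k * ι| ≤ |x| ∧
      ∃ r : ℝ, |r| ≤ ι / 2 ∧ |r| ≤ |x| ∧ (r : AddCircle p) = ↑(x - k * ι) := by
  rcases le_total 0 x with hx | hx
  · obtain ⟨k, hk₀, hkM, hkx, r, hr⟩ :=
      AddCircle.exists_int_shift_near_zero_of_nonneg hp hι hM hx
    rw [abs_of_nonneg hx]
    exact ⟨k, abs_le.mpr ⟨by omega, hkM⟩, hkx, r, hr⟩
  · obtain ⟨k, hk₀, hkM, hkx, r, hr, hrx, hr_coe⟩ :=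
      AddCircle.exists_int_shift_near_zero_of_nonneg hp hι hM (neg_nonneg.mpr hx)
    have hshift : x - (-k : ℤ) * ι = -(-x - k * ι) := by push_cast; ring
    refine ⟨-k, abs_le.mpr ⟨by omega, by omega⟩, ?_, -r, by rwa [abs_neg], ?_, ?_⟩
    · rwa [hshift, abs_neg, abs_of_nonpos hx]
    · rwa [abs_neg, abs_of_nonpos hx]
    · rw [hshift, AddCircle.coe_neg, AddCircle.coe_neg, hr_coe]

def wrappedHexagon (p d μs νs ξs : ℝ) : Set (AddCircle p × ℝ) :=
  (fun q : ℝ × ℝ => ((q.1 : AddCircle p), q.2)) ''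
    {q | ∃ μ ν ξ : ℝ, |μ| ≤ μs ∧ |ν| ≤ νs ∧ |ξ| ≤ ξs ∧ q = (μ + ν, d * ν + ξ)}

def wrappedStrip (p ι : ℝ) : Set (AddCircle p × ℝ) :=
  {q | ∃ x : ℝ, |x| ≤ ι ∧ (x : AddCircle p) = q.1}

theorem wrappedHexagon_subset_iUnion_add {p ι : ℝ} {M : ℕ} (hp : 0 < p) (hι : 0 < ι)
    (hM : p / ι ≤ M) (d μs νs ξs : ℝ) :
    wrappedHexagon p d μs νs ξs ⊆
      ⋃ (kμ : ℤ) (kν : ℤ) (_ : |kμ| ≤ (M : ℤ)) (_ : |kν| ≤ (M : ℤ)),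
        (· + (((((kμ + kν : ℤ) : ℝ) * ι : ℝ) : AddCircle p), d * kν * ι)) ''
          (wrappedHexagon p d μs νs ξs ∩ wrappedStrip p ι) := by
  rintro _ ⟨_, ⟨μ, ν, ξ, hμ, hν, hξ, rfl⟩, rfl⟩
  obtain ⟨kμ, hkμ, -, rμ, hrμ, hrμμ, hrμ_coe⟩ := AddCircle.exists_int_shift_near_zero hp hι hM μ
  obtain ⟨kν, hkν, hνkν, rν, hrν, -, hrν_coe⟩ := AddCircle.exists_int_shift_near_zero hp hι hM ν
  simp only [Set.mem_iUnion]
  refine ⟨kμ, kν, hkμ, hkν, _,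
    ⟨⟨(rμ + (ν - kν * ι), d * (ν - kν * ι) + ξ),
      ⟨rμ, ν - kν * ι, ξ, hrμμ.trans hμ, hνkν.trans hν, hξ, rfl⟩, rfl⟩,
      rμ + rν, (abs_add_le _ _).trans (by linarith), ?_⟩, ?_⟩
  · rw [AddCircle.coe_add, hrν_coe, ← AddCircle.coe_add]
  · refine Prod.ext ?_ (by simp only [Prod.snd_add]; ring)
    simp only [Prod.fst_add]
    rw [AddCircle.coe_add, hrμ_coe, ← AddCircle.coe_add, ← AddCircle.coe_add]
    congr 1
    push_cast
    ring

theorem measure_le_card_mul_of_subset_biUnion_add {G κ : Type*} [MeasurableSpace G] [AddGroup G]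
    [MeasurableAdd G] (μ : Measure G) [μ.IsAddRightInvariant] {A B : Set G} (s : Finset κ)
    (v : κ → G) (h : B ⊆ ⋃ i ∈ s, (· + v i) '' A) : μ B ≤ s.card * μ A :=
  calc μ B ≤ μ (⋃ i ∈ s, (· + v i) '' A) := measure_mono h
    _ ≤ ∑ i ∈ s, μ ((· + v i) '' A) := measure_biUnion_finset_le _ _
    _ = s.card * μ A := by
      simp only [Set.image_add_right, measure_preimage_add_right, Finset.sum_const, nsmul_eq_mul]

theorem measure_le_mul_of_subset_iUnion_add_int_box {G : Type*} [MeasurableSpace G] [AddGroup G]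
    [MeasurableAdd G] (μ : Measure G) [μ.IsAddRightInvariant] {A B : Set G} (M : ℕ)
    (v : ℤ → ℤ → G) (h : B ⊆ ⋃ (a : ℤ) (b : ℤ) (_ : |a| ≤ (M : ℤ)) (_ : |b| ≤ (M : ℤ)),
      (· + v a b) '' A) :
    μ B ≤ ((2 * M + 1) ^ 2 : ℕ) * μ A := by
  set s := Finset.Icc (-(M : ℤ)) M
  have hs : (s ×ˢ s).card = (2 * M + 1) ^ 2 := by
    rw [Finset.card_product, Int.card_Icc, sq]; congr <;> omega
  rw [← hs]
  refine measure_le_card_mul_of_subset_biUnion_add μ (s ×ˢ s) (fun k ↦ v k.1 k.2) ?_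
  refine h.trans (Set.iUnion₂_subset fun a b ↦ Set.iUnion₂_subset fun ha hb ↦ ?_)
  exact Set.subset_biUnion_of_mem (u := fun k : ℤ × ℤ ↦ (· + v k.1 k.2) '' A) (x := (a, b))
    (Finset.mem_product.mpr ⟨Finset.mem_Icc.mpr (abs_le.mp ha), Finset.mem_Icc.mpr (abs_le.mp hb)⟩)

theorem stmt_19_general (ι : ℝ) (hι : 0 < ι) (M : ℕ) (hM : 4 * Real.pi / ι ≤ (M : ℝ))
    (d μs νs ξs : ℝ) :
    ((fun p : ℝ × ℝ => ((p.1 : AddCircle (4 * Real.pi)), p.2)) ''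
        {p : ℝ × ℝ | ∃ μ ν ξ : ℝ,
          |μ| ≤ μs ∧ |ν| ≤ νs ∧ |ξ| ≤ ξs ∧ p = (μ + ν, d * ν + ξ)} ⊆
      ⋃ (kμ : ℤ) (kν : ℤ) (_ : |kμ| ≤ (M : ℤ)) (_ : |kν| ≤ (M : ℤ)),
        (fun q : AddCircle (4 * Real.pi) × ℝ =>
            (q.1 + ((((kμ + kν : ℤ) : ℝ) * ι : ℝ) : AddCircle (4 * Real.pi)),
              q.2 + d * (kν : ℝ) * ι)) ''
          (((fun p : ℝ × ℝ => ((p.1 : AddCircle (4 * Real.pi)), p.2)) ''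
              {p : ℝ × ℝ | ∃ μ ν ξ : ℝ,
                |μ| ≤ μs ∧ |ν| ≤ νs ∧ |ξ| ≤ ξs ∧ p = (μ + ν, d * ν + ξ)}) ∩
            {q : AddCircle (4 * Real.pi) × ℝ |
              ∃ x : ℝ, |x| ≤ ι ∧ (x : AddCircle (4 * Real.pi)) = q.1})) ∧
    volume ((fun p : ℝ × ℝ => ((p.1 : AddCircle (4 * Real.pi)), p.2)) ''
        {p : ℝ × ℝ | ∃ μ ν ξ : ℝ,
          |μ| ≤ μs ∧ |ν| ≤ νs ∧ |ξ| ≤ ξs ∧ p = (μ + ν, d * ν + ξ)}) ≤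
      ((2 * M + 1) ^ 2 : ℕ) *
        volume (((fun p : ℝ × ℝ => ((p.1 : AddCircle (4 * Real.pi)), p.2)) ''
            {p : ℝ × ℝ | ∃ μ ν ξ : ℝ,
              |μ| ≤ μs ∧ |ν| ≤ νs ∧ |ξ| ≤ ξs ∧ p = (μ + ν, d * ν + ξ)}) ∩
          {q : AddCircle (4 * Real.pi) × ℝ |
            ∃ x : ℝ, |x| ≤ ι ∧ (x : AddCircle (4 * Real.pi)) = q.1}) := by
  have hcover := wrappedHexagon_subset_iUnion_add (by positivity) hι hM d μs νs ξs
  refine ⟨hcover, ?_⟩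
  rw [Measure.volume_eq_prod]
  exact measure_le_mul_of_subset_iUnion_add_int_box _ M _ hcover

/-- The wrapped hexagon `H ⊆ (ℝ/4πℤ) × ℝ` is covered by the `(2M+1)²` translates
`H_ι + ((k_μ+k_ν)ι, d k_ν ι)` with `|k_μ|, |k_ν| ≤ M`, where
`H_ι = H ∩ ([−ι,ι] × ℝ)`; consequently `|H| ≤ (2M+1)² |H_ι|`. -/
theorem stmt_19 (ι : ℝ) (hι : 0 < ι) (M : ℕ) (hM : 4 * Real.pi / ι ≤ (M : ℝ))
    (d μs νs ξs : ℝ) (hd : 0 ≤ d) (hμ : 0 ≤ μs) (hν : 0 ≤ νs) (hξ : 0 ≤ ξs) :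
    ((fun p : ℝ × ℝ => ((p.1 : AddCircle (4 * Real.pi)), p.2)) ''
        {p : ℝ × ℝ | ∃ μ ν ξ : ℝ,
          |μ| ≤ μs ∧ |ν| ≤ νs ∧ |ξ| ≤ ξs ∧ p = (μ + ν, d * ν + ξ)} ⊆
      ⋃ (kμ : ℤ) (kν : ℤ) (_ : |kμ| ≤ (M : ℤ)) (_ : |kν| ≤ (M : ℤ)),
        (fun q : AddCircle (4 * Real.pi) × ℝ =>
            (q.1 + ((((kμ + kν : ℤ) : ℝ) * ι : ℝ) : AddCircle (4 * Real.pi)),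
              q.2 + d * (kν : ℝ) * ι)) ''
          (((fun p : ℝ × ℝ => ((p.1 : AddCircle (4 * Real.pi)), p.2)) ''
              {p : ℝ × ℝ | ∃ μ ν ξ : ℝ,
                |μ| ≤ μs ∧ |ν| ≤ νs ∧ |ξ| ≤ ξs ∧ p = (μ + ν, d * ν + ξ)}) ∩
            {q : AddCircle (4 * Real.pi) × ℝ |
              ∃ x : ℝ, |x| ≤ ι ∧ (x : AddCircle (4 * Real.pi)) = q.1})) ∧
    volume ((fun p : ℝ × ℝ => ((p.1 : AddCircle (4 * Real.pi)), p.2)) ''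
        {p : ℝ × ℝ | ∃ μ ν ξ : ℝ,
          |μ| ≤ μs ∧ |ν| ≤ νs ∧ |ξ| ≤ ξs ∧ p = (μ + ν, d * ν + ξ)}) ≤
      ((2 * M + 1) ^ 2 : ℕ) *
        volume (((fun p : ℝ × ℝ => ((p.1 : AddCircle (4 * Real.pi)), p.2)) ''
            {p : ℝ × ℝ | ∃ μ ν ξ : ℝ,
              |μ| ≤ μs ∧ |ν| ≤ νs ∧ |ξ| ≤ ξs ∧ p = (μ + ν, d * ν + ξ)}) ∩
          {q : AddCircle (4 * Real.pi) × ℝ |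
            ∃ x : ℝ, |x| ≤ ι ∧ (x : AddCircle (4 * Real.pi)) = q.1}) :=
  stmt_19_general ι hι M hM d μs νs ξs
end
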